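/- arXiv:1603.09686 — 9 statements merged into one kernel-verified Lean document; each statement's English description precedes it below -/
import Mathlib

section
/- In a thermodynamic state space with a set M of mechanical states, adiabatic accessibility is transitive: if a ≺ b and b ≺ c then a ≺ c. -/
/-- Adiabatic accessibility: `a ≺ b` iff there are mechanical states `k, l ∈ M`
with `a + k → b + l`. -/
def Adia {St : Type*} (add : St → St → St) (acc : St → St → Prop) (M : Set St)
    (a b : St) : Prop :=
  ∃ k ∈ M, ∃ l ∈ M, acc (add a k) (add b l)

theorem acc_add_add_of_acc {St : Type*} {add : St → St → St} {acc : St → St → Prop}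
    (hassoc : ∀ a b c, add (add a b) c = add a (add b c))
    (acc_add_right : ∀ a b c, acc a b → acc (add a c) (add b c))
    {a b k l : St} (m : St) (h : acc (add a k) (add b l)) :
    acc (add a (add k m)) (add b (add l m)) := by
  rw [← hassoc, ← hassoc]
  exact acc_add_right _ _ m h

theorem adia_trans_general {St : Type*} (add : St → St → St) (acc : St → St → Prop)
    (hcomm : ∀ a b, add a b = add b a)
    (hassoc : ∀ a b c, add (add a b) c = add a (add b c))
    (ax3 : ∀ a b c, acc a b → acc b c → acc a c)
    (ax4 : ∀ a b c, acc a b ↔ acc (add a c) (add b c))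
    (M : Set St)
    (hMadd : ∀ k ∈ M, ∀ l ∈ M, add k l ∈ M)
    (a b c : St)
    (hab : Adia add acc M a b) (hbc : Adia add acc M b c) :
    Adia add acc M a c := by
  have pad : ∀ {a b k l} (m : St), acc (add a k) (add b l) →
      acc (add a (add k m)) (add b (add l m)) :=
    acc_add_add_of_acc hassoc fun a b c ↦ (ax4 a b c).mp
  obtain ⟨k₁, hk₁, l₁, hl₁, h₁⟩ := hab
  obtain ⟨k₂, hk₂, l₂, hl₂, h₂⟩ := hbc
  refine ⟨add k₁ k₂, hMadd _ hk₁ _ hk₂, add l₂ l₁, hMadd _ hl₂ _ hl₁,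
    ax3 _ (add b (add k₂ l₁)) _ ?_ (pad l₁ h₂)⟩
  -- padding the first step by `k₂` and the second by `l₁` makes both meet at `b + (k₂ + l₁)`
  rw [← hcomm l₁ k₂]
  exact pad k₂ h₁

/-- Paper's Axiom 3′: adiabatic accessibility is transitive. -/
theorem adia_trans {St : Type*} (add : St → St → St) (acc : St → St → Prop)
    (hcomm : ∀ a b, add a b = add b a)
    (hassoc : ∀ a b c, add (add a b) c = add a (add b c))
    (ax2 : ∀ a, acc a a)
    (ax3 : ∀ a b c, acc a b → acc b c → acc a c)
    (ax4 : ∀ a b c, acc a b ↔ acc (add a c) (add b c))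
    (M : Set St)
    (hMadd : ∀ k ∈ M, ∀ l ∈ M, add k l ∈ M)
    (hMacc : ∀ k ∈ M, ∀ l ∈ M, acc k l)
    (a b c : St)
    (hab : Adia add acc M a b) (hbc : Adia add acc M b c) :
    Adia add acc M a c :=
  adia_trans_general add acc hcomm hassoc ax3 ax4 M hMadd a b c hab hbc
end

section
/- In a thermodynamic state space with a set M of mechanical states, a ≺ b if and only if a + c ≺ b + c, for all states a, b, c. -/
theorem add_right_comm_of_comm_assoc {St : Type*} (add : St → St → St)
    (hcomm : ∀ a b, add a b = add b a)
    (hassoc : ∀ a b c, add (add a b) c = add a (add b c)) (x y z : St) :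
    add (add x y) z = add (add x z) y := by
  rw [hassoc, hcomm y z, ← hassoc]

theorem acc_add_add_right_comm_iff {St : Type*} (add : St → St → St) (acc : St → St → Prop)
    (hcomm : ∀ a b, add a b = add b a)
    (hassoc : ∀ a b c, add (add a b) c = add a (add b c))
    (ax4 : ∀ a b c, acc a b ↔ acc (add a c) (add b c)) (a b c k l : St) :
    acc (add (add a c) k) (add (add b c) l) ↔ acc (add a k) (add b l) := by
  rw [add_right_comm_of_comm_assoc add hcomm hassoc a,
    add_right_comm_of_comm_assoc add hcomm hassoc b, ← ax4]

theorem adia_add_iff_general {St : Type*} (add : St → St → St) (acc : St → St → Prop)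
    (hcomm : ∀ a b, add a b = add b a)
    (hassoc : ∀ a b c, add (add a b) c = add a (add b c))
    (ax4 : ∀ a b c, acc a b ↔ acc (add a c) (add b c))
    (M : Set St)
    (a b c : St) :
    Adia add acc M a b ↔ Adia add acc M (add a c) (add b c) := by
  simp only [Adia, acc_add_add_right_comm_iff add acc hcomm hassoc ax4]

/-- Paper's Axiom 4′: `a ≺ b` if and only if `a + c ≺ b + c`. -/
theorem adia_add_iff {St : Type*} (add : St → St → St) (acc : St → St → Prop)
    (hcomm : ∀ a b, add a b = add b a)
    (hassoc : ∀ a b c, add (add a b) c = add a (add b c))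
    (ax2 : ∀ a, acc a a)
    (ax3 : ∀ a b c, acc a b → acc b c → acc a c)
    (ax4 : ∀ a b c, acc a b ↔ acc (add a c) (add b c))
    (M : Set St)
    (hMadd : ∀ k ∈ M, ∀ l ∈ M, add k l ∈ M)
    (hMacc : ∀ k ∈ M, ∀ l ∈ M, acc k l)
    (a b c : St) :
    Adia add acc M a b ↔ Adia add acc M (add a c) (add b c) :=
  adia_add_iff_general add acc hcomm hassoc ax4 M a b c
end

section
/- In a thermodynamic state space with a nonempty set M of mechanical states, assume additionally Giles's Axiom 7 for natural accessibility: if there exist states x, y such that n•a + x → n•b + y holds for arbitrarily large positive integers n, then a → b. Then the analogous statement holds for adiabatic accessibility: if there exist states x, y such that n•a + x ≺ n•b + y holds for arbitrarily large positive integers n, then a ≺ b. -/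
/-!
Any two mechanical states are naturally accessible from each other, so a witness
`u + k → v + l` of `u ≺ v` can be rerouted through a single fixed mechanical state `m`,
giving `u + m → v + m`. Applied to `n•a + x ≺ n•b + y`, this yields
`n•a + (x + m) → n•b + (y + m)` for arbitrarily large `n`, so Giles's Axiom 7 gives
`a → b`, and adding `m` to both sides gives `a ≺ b`.
-/

/-- `copies add a n` is the sum of `n` copies of `a` (for `n ≥ 1`; `copies add a 0` is junk). -/
def copies {S : Type*} (add : S → S → S) (a : S) : ℕ → S
  | 0 => a
  | 1 => a
  | n + 2 => add a (copies add a (n + 1))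

section Accessibility

variable {St : Type*} (add : St → St → St) (acc : St → St → Prop)

theorem acc_add_left (hcomm : ∀ a b, add a b = add b a)
    (ax4 : ∀ a b c, acc a b ↔ acc (add a c) (add b c)) {u v : St} (w : St) (h : acc u v) :
    acc (add w u) (add w v) := by
  simpa only [hcomm w] using (ax4 u v w).mp h

theorem acc_add_of_adia (hcomm : ∀ a b, add a b = add b a)
    (ax3 : ∀ a b c, acc a b → acc b c → acc a c)
    (ax4 : ∀ a b c, acc a b ↔ acc (add a c) (add b c))
    {M : Set St} (hMacc : ∀ k ∈ M, ∀ l ∈ M, acc k l) {u v m : St} (hm : m ∈ M)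
    (h : Adia add acc M u v) : acc (add u m) (add v m) := by
  obtain ⟨k, hk, l, hl, hkl⟩ := h
  have hmk : acc (add u m) (add u k) := acc_add_left add acc hcomm ax4 u (hMacc m hm k hk)
  have hlm : acc (add v l) (add v m) := acc_add_left add acc hcomm ax4 v (hMacc l hl m hm)
  exact ax3 _ _ _ (ax3 _ _ _ hmk hkl) hlm

end Accessibility

theorem adia_archimedean_general {St : Type*} (add : St → St → St) (acc : St → St → Prop)
    (hcomm : ∀ a b, add a b = add b a)
    (hassoc : ∀ a b c, add (add a b) c = add a (add b c))
    (ax3 : ∀ a b c, acc a b → acc b c → acc a c)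
    (ax4 : ∀ a b c, acc a b ↔ acc (add a c) (add b c))
    (M : Set St) (hMne : M.Nonempty)
    (hMacc : ∀ k ∈ M, ∀ l ∈ M, acc k l)
    (ax7 : ∀ a b : St,
      (∃ x y : St, ∀ N : ℕ, ∃ n : ℕ, N ≤ n ∧ 0 < n ∧
        acc (add (copies add a n) x) (add (copies add b n) y)) → acc a b)
    (a b : St)
    (h : ∃ x y : St, ∀ N : ℕ, ∃ n : ℕ, N ≤ n ∧ 0 < n ∧
      Adia add acc M (add (copies add a n) x) (add (copies add b n) y)) :
    Adia add acc M a b := by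
  obtain ⟨m, hm⟩ := hMne
  obtain ⟨x, y, hxy⟩ := h
  have hab : acc a b := by
    refine ax7 a b ⟨add x m, add y m, fun N => ?_⟩
    obtain ⟨n, hNn, hn, hadia⟩ := hxy N
    refine ⟨n, hNn, hn, ?_⟩
    simpa only [hassoc] using acc_add_of_adia add acc hcomm ax3 ax4 hMacc hm hadia
  exact ⟨m, hm, m, hm, (ax4 a b m).mp hab⟩

/-- Paper's Axiom 7′: if `n•a + x ≺ n•b + y` holds for arbitrarily large positive
integers `n` (for some states `x, y`), then `a ≺ b`, assuming Giles's Axiom 7 for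
natural accessibility. -/
theorem adia_archimedean {St : Type*} (add : St → St → St) (acc : St → St → Prop)
    (hcomm : ∀ a b, add a b = add b a)
    (hassoc : ∀ a b c, add (add a b) c = add a (add b c))
    (ax2 : ∀ a, acc a a)
    (ax3 : ∀ a b c, acc a b → acc b c → acc a c)
    (ax4 : ∀ a b c, acc a b ↔ acc (add a c) (add b c))
    (M : Set St) (hMne : M.Nonempty)
    (hMadd : ∀ k ∈ M, ∀ l ∈ M, add k l ∈ M)
    (hMacc : ∀ k ∈ M, ∀ l ∈ M, acc k l)
    (ax7 : ∀ a b : St,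
      (∃ x y : St, ∀ N : ℕ, ∃ n : ℕ, N ≤ n ∧ 0 < n ∧
        acc (add (copies add a n) x) (add (copies add b n) y)) → acc a b)
    (a b : St)
    (h : ∃ x y : St, ∀ N : ℕ, ∃ n : ℕ, N ≤ n ∧ 0 < n ∧
      Adia add acc M (add (copies add a n) x) (add (copies add b n) y)) :
    Adia add acc M a b :=
  adia_archimedean_general add acc hcomm hassoc ax3 ax4 M hMne hMacc ax7 a b h
end

section
/- In a thermodynamic state space with a set M of mechanical states, assume additionally (Ax5a) if a → b and a → c then b → c or c → b, and (Ax8) for every state a there exists k ∈ M with k → a. Then adiabatic accessibility is total: for any two states a, b, either a ≺ b or b ≺ a. -/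
/-! Choose mechanical states `k → a` and `l → b`. Adding `l`, resp. `k`, gives the two
natural processes `k + l → a + l` and `k + l → b + k` out of one state, and Ax5a makes their
end points comparable; either comparison is an adiabatic process between `a` and `b`. -/

theorem adia_or_adia_of_acc_of_acc {St : Type*} {add : St → St → St} {acc : St → St → Prop}
    {M : Set St} (ax5a : ∀ a b c, acc a b → acc a c → acc b c ∨ acc c b)
    {a b c k l : St} (hk : k ∈ M) (hl : l ∈ M) (ha : acc c (add a l)) (hb : acc c (add b k)) :
    Adia add acc M a b ∨ Adia add acc M b a :=
  (ax5a c _ _ ha hb).imp (fun h => ⟨l, hl, k, hk, h⟩) (fun h => ⟨k, hk, l, hl, h⟩)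

theorem adia_total_general {St : Type*} (add : St → St → St) (acc : St → St → Prop)
    (hcomm : ∀ a b, add a b = add b a)
    (ax4 : ∀ a b c, acc a b ↔ acc (add a c) (add b c))
    (ax5a : ∀ a b c, acc a b → acc a c → acc b c ∨ acc c b)
    (M : Set St)
    (ax8 : ∀ a : St, ∃ k ∈ M, acc k a)
    (a b : St) :
    Adia add acc M a b ∨ Adia add acc M b a := by
  obtain ⟨k, hkM, hka⟩ := ax8 a
  obtain ⟨l, hlM, hlb⟩ := ax8 b
  have hal : acc (add k l) (add a l) := (ax4 k a l).mp hka
  have hbk : acc (add k l) (add b k) := hcomm l k ▸ (ax4 l b k).mp hlb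
  exact adia_or_adia_of_acc_of_acc ax5a hkM hlM hal hbk

/-- Paper's Theorem 2.3: adiabatic accessibility is total. -/
theorem adia_total {St : Type*} (add : St → St → St) (acc : St → St → Prop)
    (hcomm : ∀ a b, add a b = add b a)
    (hassoc : ∀ a b c, add (add a b) c = add a (add b c))
    (ax2 : ∀ a, acc a a)
    (ax3 : ∀ a b c, acc a b → acc b c → acc a c)
    (ax4 : ∀ a b c, acc a b ↔ acc (add a c) (add b c))
    (ax5a : ∀ a b c, acc a b → acc a c → acc b c ∨ acc c b)
    (M : Set St)
    (hMadd : ∀ k ∈ M, ∀ l ∈ M, add k l ∈ M)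
    (hMacc : ∀ k ∈ M, ∀ l ∈ M, acc k l)
    (ax8 : ∀ a : St, ∃ k ∈ M, acc k a)
    (a b : St) :
    Adia add acc M a b ∨ Adia add acc M b a :=
  adia_total_general add acc hcomm ax4 ax5a M ax8 a b
end

section
/- Fix a reference state e and a state a in a thermodynamic state space whose adiabatic accessibility relation ≺ is total, transitive, satisfies a ≺ b ↔ a + c ≺ b + c, and satisfies the scaling property (a ≺ b implies n•a ≺ n•b for every positive integer n). Suppose the positive integers m, n, m', n' are such that: n•a ≺ m•e and m/n is a lower bound for U(a) (i.e. for all positive integers p, q, if q•a ≺ p•e then m/n ≤ p/q); m'•e ≺ n'•a and m'/n' is an upper bound for L(a) (i.e. for all positive integers p, q, if p•e ≺ q•a then p/q ≤ m'/n'); and m'/n' ≤ m/n. Then m/n = m'/n'. -/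
theorem exists_nat_div_btwn {x y : ℝ} (hy : 0 ≤ y) (hyx : y < x) :
    ∃ p q : ℕ, 0 < p ∧ 0 < q ∧ y < (p : ℝ) / q ∧ (p : ℝ) / q < x := by
  obtain ⟨q, hq⟩ := exists_nat_gt (1 / (x - y))
  have hxy : 0 < x - y := sub_pos.2 hyx
  have hq₀ : (0 : ℝ) < q := (one_div_pos.2 hxy).trans hq
  have hgap : 1 < q * (x - y) := by rwa [div_lt_iff₀ hxy] at hq
  -- `p = ⌊q y⌋ + 1` satisfies `q y < p ≤ q y + 1 < q x`.
  set p := ⌊q * y⌋₊ + 1 with hp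
  have hp_gt : q * y < p := by
    simpa only [hp, Nat.cast_add, Nat.cast_one] using Nat.lt_floor_add_one (q * y)
  have hp_le : (p : ℝ) ≤ q * y + 1 := by
    simp only [hp, Nat.cast_add, Nat.cast_one]
    linarith [Nat.floor_le (mul_nonneg hq₀.le hy)]
  refine ⟨p, q, Nat.succ_pos _, Nat.cast_pos.1 hq₀, ?_, ?_⟩
  · rw [lt_div_iff₀ hq₀]; linarith
  · rw [div_lt_iff₀ hq₀]; linarith

theorem eq_of_le_of_forall_nat_div_le_or_le {x y : ℝ} (hy : 0 ≤ y) (hyx : y ≤ x)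
    (h : ∀ p q : ℕ, 0 < p → 0 < q → x ≤ (p : ℝ) / q ∨ (p : ℝ) / q ≤ y) : x = y := by
  refine (hyx.eq_or_lt.resolve_right fun hlt => ?_).symm
  obtain ⟨p, q, hp, hq, hyr, hrx⟩ := exists_nat_div_btwn hy hlt
  rcases h p q hp hq with hxr | hry
  · exact hrx.not_ge hxr
  · exact hyr.not_ge hry

theorem min_upper_eq_max_lower_general {St : Type*} (add : St → St → St) (prec : St → St → Prop)
    (htotal : ∀ a b, prec a b ∨ prec b a)
    (e a : St) (m n m' n' : ℕ)
    (hlb : ∀ p q : ℕ, 0 < p → 0 < q →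
      prec (copies add a q) (copies add e p) → (m : ℝ) / n ≤ (p : ℝ) / q)
    (hub : ∀ p q : ℕ, 0 < p → 0 < q →
      prec (copies add e p) (copies add a q) → (p : ℝ) / q ≤ (m' : ℝ) / n')
    (hle : (m' : ℝ) / n' ≤ (m : ℝ) / n) :
    (m : ℝ) / n = (m' : ℝ) / n' :=
  eq_of_le_of_forall_nat_div_le_or_le (by positivity) hle fun p q hp hq =>
    (htotal _ _).imp (hlb p q hp hq) (hub p q hp hq)

/-- Paper's Theorem 2.4: the minimum of `U(a)` equals the maximum of `L(a)`. -/
theorem min_upper_eq_max_lower {St : Type*} (add : St → St → St) (prec : St → St → Prop)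
    (hcomm : ∀ a b, add a b = add b a)
    (hassoc : ∀ a b c, add (add a b) c = add a (add b c))
    (htotal : ∀ a b, prec a b ∨ prec b a)
    (htrans : ∀ a b c, prec a b → prec b c → prec a c)
    (hcancel : ∀ a b c, prec a b ↔ prec (add a c) (add b c))
    (hscale : ∀ a b, prec a b → ∀ n : ℕ, 0 < n → prec (copies add a n) (copies add b n))
    (e a : St) (m n m' n' : ℕ)
    (hm : 0 < m) (hn : 0 < n) (hm' : 0 < m') (hn' : 0 < n')
    (h1 : prec (copies add a n) (copies add e m))
    (hlb : ∀ p q : ℕ, 0 < p → 0 < q →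
      prec (copies add a q) (copies add e p) → (m : ℝ) / n ≤ (p : ℝ) / q)
    (h2 : prec (copies add e m') (copies add a n'))
    (hub : ∀ p q : ℕ, 0 < p → 0 < q →
      prec (copies add e p) (copies add a q) → (p : ℝ) / q ≤ (m' : ℝ) / n')
    (hle : (m' : ℝ) / n' ≤ (m : ℝ) / n) :
    (m : ℝ) / n = (m' : ℝ) / n' :=
  min_upper_eq_max_lower_general add prec htotal e a m n m' n' hlb hub hle
end

section
/- Let a and b be real numbers with 1/2 ≤ a < b < 1. Then there exist no positive integers n and m such that aⁿ = bᵐ and (1−a)ⁿ = (1−b)ᵐ. (Equivalently, for two inequivalent entangled pure states of a 2×d system with largest ordered Schmidt coefficients a and b, there is no reversible deterministic LOCC process between n copies of one and m copies of the other.) -/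
/-! Since `a < b`, the equation `aⁿ = bᵐ` forces `n < m`; since `1 - b < 1 - a`, the equation
`(1 - b)ᵐ = (1 - a)ⁿ` forces `m < n`. -/

theorem lt_of_pow_eq_pow_of_lt_of_lt_one {R : Type*} [Semiring R] [LinearOrder R]
    [IsStrictOrderedRing R] {x y : R} {n m : ℕ} (hx₀ : 0 < x) (hx₁ : x < 1) (hxy : x < y)
    (hm : m ≠ 0) (h : x ^ n = y ^ m) : n < m := by
  have hpow : x ^ m < x ^ n := h ▸ pow_lt_pow_left₀ hxy hx₀.le hm
  exact (pow_lt_pow_iff_right_of_lt_one₀ hx₀ hx₁).mp hpow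

/-- Paper's Theorem 4.2: for `1/2 ≤ a < b < 1` there are no positive integers `n, m`
with `aⁿ = bᵐ` and `(1−a)ⁿ = (1−b)ᵐ`; i.e. no reversible deterministic LOCC process
exists between `n` copies of one `2×d` pure state and `m` copies of an inequivalent one. -/
theorem no_reversible_process_two_by_d (a b : ℝ)
    (ha : 1 / 2 ≤ a) (hab : a < b) (hb : b < 1) :
    ¬ ∃ n m : ℕ, 0 < n ∧ 0 < m ∧ a ^ n = b ^ m ∧ (1 - a) ^ n = (1 - b) ^ m := by
  rintro ⟨n, m, hn, hm, h_large, h_small⟩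
  have hnm : n < m :=
    lt_of_pow_eq_pow_of_lt_of_lt_one (by linarith) (hab.trans hb) hab hm.ne' h_large
  have hmn : m < n :=
    lt_of_pow_eq_pow_of_lt_of_lt_one (by linarith) (by linarith) (by linarith) hn.ne'
      h_small.symm
  omega
end

section
/- Let a and b be real numbers with 1/2 < a < b < 1. Then there exist positive integers n and m such that the n-fold tensor power of the ordered probability vector (a, 1−a) and the m-fold tensor power of (b, 1−b) are majorization-incomparable: neither vector is majorized by the other (after padding with zeros to a common length). -/
/-- All pairwise products of entries of two vectors (unsorted). -/
def tensorList (l₁ l₂ : List ℝ) : List ℝ :=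
  l₁.flatMap fun x => l₂.map fun y => x * y

/-- `n`-fold tensor product of a vector with itself. -/
def tensorPow (l : List ℝ) : ℕ → List ℝ
  | 0 => [1]
  | n + 1 => tensorList l (tensorPow l n)

/-- Sum of the first `k` entries (zero padding beyond the length is implicit). -/
def partSum (l : List ℝ) (k : ℕ) : ℝ := (l.take k).sum

/-- `l₁` is majorized by `l₂` (for nonincreasing lists, after zero padding). -/
def MajLe (l₁ l₂ : List ℝ) : Prop := ∀ k : ℕ, partSum l₁ k ≤ partSum l₂ k

/-!
Choose `n` with `aⁿ < bⁿ⁺¹` (possible since `(a/b)ⁿ → 0`). The largest entry of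
`(b, 1-b)^{⊗(n+1)}` is `bⁿ⁺¹`, which exceeds every entry of `(a, 1-a)^{⊗n}`, so the first partial
sums already rule out that the former is majorized by the latter. Conversely, the `2ⁿ` entries of
`(a, 1-a)^{⊗n}` sum to `1`, while any `2ⁿ⁺¹ - 1 ≥ 2ⁿ` entries of `(b, 1-b)^{⊗(n+1)}` miss a
positive entry and so sum to less than `1`.
-/

section TensorPow

variable {l l₁ l₂ : List ℝ}

theorem mem_tensorList {e : ℝ} : e ∈ tensorList l₁ l₂ ↔ ∃ p ∈ l₁, ∃ q ∈ l₂, e = p * q := by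
  simp [tensorList, eq_comm]

theorem tensorList_sum (l₁ l₂ : List ℝ) : (tensorList l₁ l₂).sum = l₁.sum * l₂.sum := by
  induction l₁ with
  | nil => simp [tensorList]
  | cons x t ih =>
    simp only [tensorList, List.flatMap_cons, List.sum_append, List.sum_cons] at ih ⊢
    rw [ih, List.sum_map_mul_left, List.map_id', add_mul]

theorem tensorList_length (l₁ l₂ : List ℝ) :
    (tensorList l₁ l₂).length = l₁.length * l₂.length := by
  induction l₁ with
  | nil => simp [tensorList]
  | cons x t ih =>
    simp only [tensorList, List.flatMap_cons, List.length_append, List.length_map,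
      List.length_cons] at ih ⊢
    rw [ih, add_mul, one_mul, add_comm]

theorem tensorPow_sum (l : List ℝ) (n : ℕ) : (tensorPow l n).sum = l.sum ^ n := by
  induction n with
  | zero => simp [tensorPow]
  | succ n ih => rw [tensorPow, tensorList_sum, ih, pow_succ']

theorem tensorPow_length (l : List ℝ) (n : ℕ) : (tensorPow l n).length = l.length ^ n := by
  induction n with
  | zero => simp [tensorPow]
  | succ n ih => rw [tensorPow, tensorList_length, ih, pow_succ']

theorem pow_mem_tensorPow {x : ℝ} (hx : x ∈ l) (n : ℕ) : x ^ n ∈ tensorPow l n := by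
  induction n with
  | zero => simp [tensorPow]
  | succ n ih => exact mem_tensorList.2 ⟨x, hx, x ^ n, ih, pow_succ' x n⟩

theorem pos_of_mem_tensorPow (hl : ∀ p ∈ l, 0 < p) (n : ℕ) :
    ∀ e ∈ tensorPow l n, 0 < e := by
  induction n with
  | zero => simp [tensorPow]
  | succ n ih =>
    intro e he
    obtain ⟨p, hp, q, hq, rfl⟩ := mem_tensorList.1 he
    exact mul_pos (hl p hp) (ih q hq)

theorem mem_Icc_of_mem_tensorPow {c : ℝ} (hl : ∀ p ∈ l, p ∈ Set.Icc 0 c) (n : ℕ) :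
    ∀ e ∈ tensorPow l n, e ∈ Set.Icc 0 (c ^ n) := by
  induction n with
  | zero => simp [tensorPow]
  | succ n ih =>
    intro e he
    obtain ⟨p, hp, q, hq, rfl⟩ := mem_tensorList.1 he
    obtain ⟨hp0, hpc⟩ := hl p hp
    obtain ⟨hq0, hqc⟩ := ih q hq
    exact ⟨mul_nonneg hp0 hq0, pow_succ' c n ▸ mul_le_mul hpc hqc hq0 (hp0.trans hpc)⟩

end TensorPow

section Majorization

variable {l γ δ : List ℝ}

theorem partSum_eq_sum_of_length_le {k : ℕ} (hk : l.length ≤ k) : partSum l k = l.sum := by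
  rw [partSum, List.take_of_length_le hk]

theorem partSum_lt_sum (hl : ∀ e ∈ l, 0 < e) {k : ℕ} (hk : k < l.length) :
    partSum l k < l.sum := by
  have hdrop : 0 < (l.drop k).sum :=
    List.sum_pos _ (fun e he => hl e (List.mem_of_mem_drop he))
      (by simpa [List.drop_eq_nil_iff] using hk)
  rw [← List.sum_take_add_sum_drop l k, partSum]
  linarith

theorem partSum_one_le {c : ℝ} (hl : ∀ e ∈ l, e ≤ c) (hc : 0 ≤ c) : partSum l 1 ≤ c := by
  cases l with
  | nil => simpa [partSum] using hc
  | cons x t => simpa [partSum] using hl x List.mem_cons_self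

theorem le_partSum_one (hl : l.Pairwise (· ≥ ·)) {y : ℝ} (hy : y ∈ l) : y ≤ partSum l 1 := by
  cases l with
  | nil => simp at hy
  | cons x t =>
    simp only [partSum, List.take_succ_cons, List.take_zero, List.sum_cons, List.sum_nil,
      add_zero]
    rcases List.mem_cons.1 hy with rfl | hy
    · exact le_rfl
    · exact List.rel_of_pairwise_cons hl hy

theorem not_majLe_of_length_lt (hsum : γ.sum = δ.sum) (hδ : ∀ e ∈ δ, 0 < e)
    (hlen : γ.length < δ.length) : ¬ MajLe γ δ := fun h => by
  have hk := h (δ.length - 1)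
  rw [partSum_eq_sum_of_length_le (by omega), hsum] at hk
  exact hk.not_gt (partSum_lt_sum hδ (by omega))

theorem not_majLe_of_forall_le {c y : ℝ} (hδ : δ.Pairwise (· ≥ ·)) (hy : y ∈ δ)
    (hγ : ∀ e ∈ γ, e ≤ c) (hc : 0 ≤ c) (hcy : c < y) : ¬ MajLe δ γ := fun h =>
  ((h 1).trans (partSum_one_le hγ hc)).not_gt (hcy.trans_le (le_partSum_one hδ hy))

end Majorization

theorem exists_pow_lt_pow_succ {a b : ℝ} (ha : 0 ≤ a) (hab : a < b) :
    ∃ n : ℕ, 0 < n ∧ a ^ n < b ^ (n + 1) := by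
  have hb : 0 < b := ha.trans_lt hab
  have hsmall : ∀ᶠ n : ℕ in Filter.atTop, (a / b) ^ n < b :=
    (tendsto_pow_atTop_nhds_zero_of_lt_one (div_nonneg ha hb.le) ((div_lt_one hb).2 hab)).eventually
      (gt_mem_nhds hb)
  obtain ⟨n, hn, hlt⟩ := ((Filter.eventually_gt_atTop 0).and hsmall).exists
  refine ⟨n, hn, ?_⟩
  calc a ^ n = b ^ n * (a / b) ^ n := by rw [div_pow, mul_div_cancel₀ _ (pow_ne_zero n hb.ne')]
    _ < b ^ n * b := mul_lt_mul_of_pos_left hlt (pow_pos hb n)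
    _ = b ^ (n + 1) := (pow_succ b n).symm

/-- Paper's second Corollary 4.1: for `1/2 < a < b < 1` there are positive integers
`n, m` such that the sorted tensor powers `(a, 1−a)^{⊗n}` and `(b, 1−b)^{⊗m}` are
majorization-incomparable: the set of `2×d` pure states and their tensor products
is only partially ordered. -/
theorem exists_incomparable_tensor_powers (a b : ℝ)
    (ha : 1 / 2 < a) (hab : a < b) (hb : b < 1) :
    ∃ n m : ℕ, 0 < n ∧ 0 < m ∧
      ∀ γ δ : List ℝ,
        γ.Perm (tensorPow [a, 1 - a] n) → γ.Pairwise (· ≥ ·) →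
        δ.Perm (tensorPow [b, 1 - b] m) → δ.Pairwise (· ≥ ·) →
        ¬ MajLe γ δ ∧ ¬ MajLe δ γ := by
  obtain ⟨n, hn, hpow⟩ := exists_pow_lt_pow_succ (by linarith : (0 : ℝ) ≤ a) hab
  refine ⟨n, n + 1, hn, n.succ_pos, fun γ δ hγ _ hδ hδs => ⟨?_, ?_⟩⟩
  · refine not_majLe_of_length_lt ?_ ?_ ?_
    · simp [hγ.sum_eq, hδ.sum_eq, tensorPow_sum]
    · refine fun e he => pos_of_mem_tensorPow ?_ _ e (hδ.mem_iff.1 he)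
      simp only [List.mem_cons, List.not_mem_nil, or_false, forall_eq_or_imp, forall_eq]
      constructor <;> linarith
    · simpa [hγ.length_eq, hδ.length_eq, tensorPow_length] using
        Nat.pow_lt_pow_right (by norm_num : 1 < 2) n.lt_succ_self
  · refine not_majLe_of_forall_le hδs (hδ.mem_iff.2 (pow_mem_tensorPow (by simp) _))
      (fun e he => (mem_Icc_of_mem_tensorPow ?_ n e (hγ.mem_iff.1 he)).2) (by positivity) hpow
    simp only [List.mem_cons, List.not_mem_nil, or_false, forall_eq_or_imp, forall_eq,
      Set.mem_Icc]
    refine ⟨⟨?_, le_rfl⟩, ?_, ?_⟩ <;> linarith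
end

section
/- Let (a₁, a₂), (a₁', a₂') and (b₁, b₂) be ordered probability vectors of length 2 (so a₁ ≥ a₂ ≥ 0, a₁ + a₂ = 1, and similarly for the others). Then the sorted 4-entry product vector (a₁, a₂) ⊗ (b₁, b₂) is majorized by (a₁', a₂') ⊗ (b₁, b₂) if and only if a₁ ≤ a₁'. (Equivalently, for pure states of 2-dimensional Schmidt rank, φ₁ ⊗ ψ → φ₂ ⊗ ψ under deterministic LOCC if and only if φ₁ → φ₂.) -/
/-!
The sorted product vector of `(a₁, a₂)` and `(b₁, b₂)` is
`(a₁b₁, max (a₁b₂) (a₂b₁), min (a₁b₂) (a₂b₁), a₂b₂)`, whose partial sums are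
`a₁b₁`, `max a₁ b₁`, `1 - a₂b₂` and `1`. With `b` fixed each of these is monotone in `a₁`
(recall `a₂ = 1 - a₁`), and the first one is strictly so since `b₁ ≥ 1/2`.
-/

lemma majLe_four_iff {x₁ x₂ x₃ x₄ y₁ y₂ y₃ y₄ : ℝ} :
    MajLe [x₁, x₂, x₃, x₄] [y₁, y₂, y₃, y₄] ↔
      x₁ ≤ y₁ ∧ x₁ + x₂ ≤ y₁ + y₂ ∧ x₁ + x₂ + x₃ ≤ y₁ + y₂ + y₃ ∧
        x₁ + x₂ + x₃ + x₄ ≤ y₁ + y₂ + y₃ + y₄ := by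
  refine ⟨fun h => ⟨?_, ?_, ?_, ?_⟩, fun ⟨h₁, h₂, h₃, h₄⟩ k => ?_⟩
  · simpa [partSum] using h 1
  · simpa [partSum, add_assoc] using h 2
  · simpa [partSum, add_assoc] using h 3
  · simpa [partSum, add_assoc] using h 4
  · match k with
    | 0 => simp [partSum]
    | 1 => simpa [partSum] using h₁
    | 2 => simpa [partSum, add_assoc] using h₂
    | 3 => simpa [partSum, add_assoc] using h₃
    | n + 4 => simpa [partSum, add_assoc] using h₄

lemma tensorList_pair (a₁ a₂ b₁ b₂ : ℝ) :
    tensorList [a₁, a₂] [b₁, b₂] = [a₁ * b₁, a₁ * b₂, a₂ * b₁, a₂ * b₂] := by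
  simp [tensorList]

lemma List.perm_max_min {α : Type*} [LinearOrder α] (x y : α) :
    [x, y].Perm [max x y, min x y] := by
  rcases le_total x y with h | h
  · rw [max_eq_right h, min_eq_left h]; exact List.Perm.swap y x []
  · rw [max_eq_left h, min_eq_right h]

lemma eq_sorted_tensorList_pair {a₁ a₂ b₁ b₂ : ℝ} (ha : a₂ ≤ a₁) (ha₂ : 0 ≤ a₂)
    (hb : b₂ ≤ b₁) (hb₂ : 0 ≤ b₂) {γ : List ℝ}
    (hperm : γ.Perm (tensorList [a₁, a₂] [b₁, b₂])) (hsorted : γ.Pairwise (· ≥ ·)) :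
    γ = [a₁ * b₁, max (a₁ * b₂) (a₂ * b₁), min (a₁ * b₂) (a₂ * b₁), a₂ * b₂] := by
  have ha₁ : 0 ≤ a₁ := ha₂.trans ha
  have hb₁ : 0 ≤ b₁ := hb₂.trans hb
  have hmax : max (a₁ * b₂) (a₂ * b₁) ≤ a₁ * b₁ := max_le (by gcongr) (by gcongr)
  have hmin : a₂ * b₂ ≤ min (a₁ * b₂) (a₂ * b₁) := le_min (by gcongr) (by gcongr)
  refine List.Perm.eq_of_pairwise' hsorted ?_ (hperm.trans ?_)
  · rw [← List.isChain_iff_pairwise]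
    simp only [List.isChain_cons_cons, List.isChain_singleton, and_true]
    exact ⟨hmax, min_le_max, hmin⟩
  · rw [tensorList_pair]
    exact .cons _ ((List.perm_max_min _ _).append_right [a₂ * b₂])

lemma sum_top_two_tensor_pair {a₁ a₂ b₁ b₂ : ℝ} (ha : a₁ + a₂ = 1) (hb : b₁ + b₂ = 1) :
    a₁ * b₁ + max (a₁ * b₂) (a₂ * b₁) = max a₁ b₁ := by
  rw [← max_add_add_left]
  congr 1
  · linear_combination a₁ * hb
  · linear_combination b₁ * ha

lemma sum_top_three_tensor_pair {a₁ a₂ b₁ b₂ : ℝ} (ha : a₁ + a₂ = 1) (hb : b₁ + b₂ = 1) :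
    a₁ * b₁ + max (a₁ * b₂) (a₂ * b₁) + min (a₁ * b₂) (a₂ * b₁) = 1 - a₂ * b₂ := by
  rw [add_assoc, max_add_min]
  linear_combination (b₁ + b₂) * ha + hb

/-- Paper's verification of Axiom 4 for `2×d` systems: the sorted product vector
`(a₁, a₂) ⊗ (b₁, b₂)` is majorized by `(a₁', a₂') ⊗ (b₁, b₂)` if and only if `a₁ ≤ a₁'`.
(For pure states of Schmidt rank 2, `φ₁ ⊗ ψ → φ₂ ⊗ ψ` under deterministic LOCC iff
`φ₁ → φ₂`.) -/
theorem tensor_majorized_iff (a₁ a₂ a₁' a₂' b₁ b₂ : ℝ)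
    (ha : a₂ ≤ a₁) (ha2 : 0 ≤ a₂) (hasum : a₁ + a₂ = 1)
    (ha' : a₂' ≤ a₁') (ha2' : 0 ≤ a₂') (hasum' : a₁' + a₂' = 1)
    (hb : b₂ ≤ b₁) (hb2 : 0 ≤ b₂) (hbsum : b₁ + b₂ = 1) :
    ∀ γ δ : List ℝ,
      γ.Perm (tensorList [a₁, a₂] [b₁, b₂]) → γ.Pairwise (· ≥ ·) →
      δ.Perm (tensorList [a₁', a₂'] [b₁, b₂]) → δ.Pairwise (· ≥ ·) →
      (MajLe γ δ ↔ a₁ ≤ a₁') := by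
  intro γ δ hγ hγs hδ hδs
  rw [eq_sorted_tensorList_pair ha ha2 hb hb2 hγ hγs,
    eq_sorted_tensorList_pair ha' ha2' hb hb2 hδ hδs, majLe_four_iff,
    sum_top_three_tensor_pair hasum hbsum, sum_top_three_tensor_pair hasum' hbsum,
    sub_add_cancel, sub_add_cancel,
    sum_top_two_tensor_pair hasum hbsum, sum_top_two_tensor_pair hasum' hbsum]
  have hb₁ : 0 < b₁ := by linarith
  constructor
  · rintro ⟨h, -⟩
    exact le_of_mul_le_mul_right h hb₁
  · intro h
    have ha₂ : a₂' ≤ a₂ := by linarith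
    exact ⟨by gcongr, by gcongr, by gcongr, le_rfl⟩
end

section
/- Consider the ordered probability vectors α = (0.4, 0.4, 0.1, 0.1), β = (0.5, 0.25, 0.25) and η = (0.6, 0.4). Then: (i) neither α is majorized by β nor β by α (after padding β with a zero to length 4); but (ii) the sorted 8-entry product vector α ⊗ η = (0.24, 0.24, 0.16, 0.16, 0.06, 0.06, 0.04, 0.04) is majorized by the sorted product vector β ⊗ η = (0.3, 0.2, 0.15, 0.15, 0.1, 0.1) padded with zeros. (Equivalently, the states ψ₁ = √0.4|00⟩+√0.4|11⟩+√0.1|22⟩+√0.1|33⟩ and ψ₂ = √0.5|00⟩+√0.25|11⟩+√0.25|22⟩ are LOCC-incomparable, yet the catalytic transformation ψ₁ ⊗ η → ψ₂ ⊗ η with η = √0.6|00⟩+√0.4|11⟩ is deterministically possible, violating Axiom 4 for general pure states.) -/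
/-!
The incomparability of `α` and `β` is witnessed by the first two partial sums:
`0.4 < 0.5` but `0.8 > 0.75`. For the catalysed pair, partial sums stop changing once `k`
exceeds the length of both lists, so majorization reduces to finitely many numerical checks.
-/

@[simp]
lemma tensorList_cons (x : ℝ) (l₁ l₂ : List ℝ) :
    tensorList (x :: l₁) l₂ = l₂.map (x * ·) ++ tensorList l₁ l₂ := rfl

@[simp]
lemma tensorList_nil (l : List ℝ) : tensorList [] l = [] := rfl

lemma tensorList_cons_cons_self_perm (x a b : ℝ) (l : List ℝ) :
    (tensorList (x :: x :: l) [a, b]).Perm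
      (x * a :: x * a :: x * b :: x * b :: tensorList l [a, b]) :=
  .cons _ (.trans (.swap _ _ _) (.cons _ (.cons _ (.refl _))))

lemma partSum_of_length_le {l : List ℝ} {k : ℕ} (h : l.length ≤ k) : partSum l k = l.sum := by
  rw [partSum, List.take_of_length_le h]

lemma majLe_of_forall_le {l₁ l₂ : List ℝ} {n : ℕ} (h₁ : l₁.length ≤ n) (h₂ : l₂.length ≤ n)
    (h : ∀ k ≤ n, partSum l₁ k ≤ partSum l₂ k) : MajLe l₁ l₂ := by
  intro k
  rcases le_total k n with hk | hk
  · exact h k hk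
  · rw [partSum_of_length_le (h₁.trans hk), partSum_of_length_le (h₂.trans hk),
      ← partSum_of_length_le h₁, ← partSum_of_length_le h₂]
    exact h n le_rfl

/-- The Jonathan–Plenio catalysis example (Eqs. (4.11)–(4.13) of the paper):
`α = (0.4, 0.4, 0.1, 0.1)` and `β = (0.5, 0.25, 0.25)` are majorization-incomparable,
yet with the catalyst `η = (0.6, 0.4)` the sorted product vector `α ⊗ η` is majorized
by the sorted product vector `β ⊗ η`. -/
theorem catalysis_example :
    (¬ MajLe [(0.4 : ℝ), 0.4, 0.1, 0.1] [(0.5 : ℝ), 0.25, 0.25] ∧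
     ¬ MajLe [(0.5 : ℝ), 0.25, 0.25] [(0.4 : ℝ), 0.4, 0.1, 0.1]) ∧
    ([(0.24 : ℝ), 0.24, 0.16, 0.16, 0.06, 0.06, 0.04, 0.04].Perm
        (tensorList [(0.4 : ℝ), 0.4, 0.1, 0.1] [(0.6 : ℝ), 0.4]) ∧
     [(0.24 : ℝ), 0.24, 0.16, 0.16, 0.06, 0.06, 0.04, 0.04].Pairwise (· ≥ ·) ∧
     [(0.3 : ℝ), 0.2, 0.15, 0.15, 0.1, 0.1].Perm
        (tensorList [(0.5 : ℝ), 0.25, 0.25] [(0.6 : ℝ), 0.4]) ∧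
     [(0.3 : ℝ), 0.2, 0.15, 0.15, 0.1, 0.1].Pairwise (· ≥ ·) ∧
     MajLe [(0.24 : ℝ), 0.24, 0.16, 0.16, 0.06, 0.06, 0.04, 0.04]
           [(0.3 : ℝ), 0.2, 0.15, 0.15, 0.1, 0.1]) := by
  have hα : (tensorList [(0.4 : ℝ), 0.4, 0.1, 0.1] [0.6, 0.4]).Perm
      [0.24, 0.24, 0.16, 0.16, 0.06, 0.06, 0.04, 0.04] := by
    have := (tensorList_cons_cons_self_perm 0.4 0.6 0.4 [0.1, 0.1]).trans
      ((tensorList_cons_cons_self_perm 0.1 0.6 0.4 []).cons _ |>.cons _ |>.cons _ |>.cons _)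
    convert this using 1
    norm_num
  have hβ : (tensorList [(0.5 : ℝ), 0.25, 0.25] [0.6, 0.4]).Perm
      [0.3, 0.2, 0.15, 0.15, 0.1, 0.1] := by
    have := (tensorList_cons_cons_self_perm 0.25 0.6 0.4 []).cons (0.5 * 0.4) |>.cons (0.5 * 0.6)
    convert this using 1 <;> norm_num
  refine ⟨⟨fun h => ?_, fun h => ?_⟩, hα.symm, ?_, hβ.symm, ?_, ?_⟩
  · exact absurd (h 2) (by norm_num [partSum])
  · exact absurd (h 1) (by norm_num [partSum])
  · norm_num [List.pairwise_cons]
  · norm_num [List.pairwise_cons]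
  · exact majLe_of_forall_le (n := 8) (by simp) (by simp)
      (fun k hk => by interval_cases k <;> norm_num [partSum])
end
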